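/- Let 𝔽 ⊆ 𝔻 be a finite subset of the dyadic tree with local height n = max_{t∈[0,1)} |𝔽 ∩ 𝔹(t)|. Then there exists m ∈ ℕ and a finite sequence of admissible-index transforms Φ_{h_1}^{(i_1)}, …, Φ_{h_N}^{(i_N)} carrying 𝔽 = 𝔽₀ to 𝔽₁, …, to 𝔽_N, such that 𝔽_N ⊆ 𝔻_{m+1}^{m+n}. -/

import Mathlib

open MeasureTheory Real Set
open scoped Classical

noncomputable section

/-- The dyadic interval `Δ_k^{(j)} = [(j-1)/2^k, j/2^k)`. -/
def dyadic (k : ℕ) (j : ℤ) : Set ℝ := Set.Ico (((j : ℝ) - 1) / 2 ^ k) ((j : ℝ) / 2 ^ k)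

/-- The Haar function `χ_k^{(j)}`. -/
def haar (k : ℕ) (j : ℤ) (t : ℝ) : ℝ :=
  if t ∈ dyadic k (2 * j - 1) then (2 : ℝ) ^ (((k : ℝ) - 1) / 2)
  else if t ∈ dyadic k (2 * j) then -(2 : ℝ) ^ (((k : ℝ) - 1) / 2)
  else 0

/-- Membership in the dyadic tree `𝔻`. -/
def memD (kj : ℕ × ℤ) : Prop := 1 ≤ kj.1 ∧ 1 ≤ kj.2 ∧ kj.2 ≤ 2 ^ (kj.1 - 1)

/-- The finite dyadic tree `𝔻_m^n`. -/
def Dtree (m n : ℕ) : Finset (ℕ × ℤ) :=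
  (Finset.Icc m n).biUnion fun k => (Finset.Icc (1 : ℤ) (2 ^ (k - 1))).image fun j => (k, j)

/-- Number of indices of `F` lying on the branch through `t`. -/
def branchCount (F : Finset (ℕ × ℤ)) (t : ℝ) : ℕ :=
  (F.filter fun kj => t ∈ dyadic (kj.1 - 1) kj.2).card

/-- The local height of a finite index set. -/
def lh (F : Finset (ℕ × ℤ)) : ℕ :=
  sSup {m | ∃ t ∈ Set.Ico (0 : ℝ) 1, branchCount F t = m}

/-- The transformation `φ_h^{(i)}` interchanging `Δ_{h+1}^{(4i-2)}` and `Δ_{h+1}^{(4i-1)}`. -/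
def phi (h : ℕ) (i : ℤ) (t : ℝ) : ℝ :=
  if t ∈ dyadic (h + 1) (4 * i - 2) then t + 1 / 2 ^ (h + 1)
  else if t ∈ dyadic (h + 1) (4 * i - 1) then t - 1 / 2 ^ (h + 1)
  else t

/-- The Haar type ideal norm `τ(T | ℋ(F))`. -/
def tau {X Y : Type*} [NormedAddCommGroup X] [NormedSpace ℝ X]
    [NormedAddCommGroup Y] [NormedSpace ℝ Y]
    (T : X →L[ℝ] Y) (F : Finset (ℕ × ℤ)) : ℝ :=
  sInf {c : ℝ | 0 ≤ c ∧ ∀ x : ℕ × ℤ → X,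
    Real.sqrt (∫ t in Set.Ico (0 : ℝ) 1, ‖∑ kj ∈ F, haar kj.1 kj.2 t • T (x kj)‖ ^ 2)
      ≤ c * Real.sqrt (∑ kj ∈ F, ‖x kj‖ ^ 2)}

end

noncomputable section

/-- The relabeling of indices induced by `φ_h^{(i)}` (Lemma 2). -/
def relabel (h : ℕ) (i : ℤ) (kj : ℕ × ℤ) : ℕ × ℤ :=
  if dyadic (kj.1 - 1) kj.2 ⊆ dyadic (h + 1) (4 * i - 2) then
    (kj.1, kj.2 + 2 ^ (kj.1 - h - 2))
  else if dyadic (kj.1 - 1) kj.2 ⊆ dyadic (h + 1) (4 * i - 1) then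
    (kj.1, kj.2 - 2 ^ (kj.1 - h - 2))
  else kj

/-- The index set transform `Φ_h^{(i)}(F)`: replace the admissible index `(h,i)` by its two
successors and relabel the remaining indices according to `χ_k^{(j)} ∘ φ_h^{(i)} = χ_k^{(j*)}`. -/
def PhiT (h : ℕ) (i : ℤ) (F : Finset (ℕ × ℤ)) : Finset (ℕ × ℤ) :=
  insert (h + 1, 2 * i - 1) (insert (h + 1, 2 * i)
    ((F.erase (h, i)).image (relabel h i)))

/-- An index `(h,i)` is `F`-admissible if it belongs to `F` but its successors do not. -/
def admissible (F : Finset (ℕ × ℤ)) (hi : ℕ × ℤ) : Prop :=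
  hi ∈ F ∧ (hi.1 + 1, 2 * hi.2 - 1) ∉ F ∧ (hi.1 + 1, 2 * hi.2) ∉ F
section Lemmas

lemma two_pow_pos' (k : ℕ) : (0:ℝ) < 2 ^ k := by positivity

lemma mem_dyadic_iff {k : ℕ} {j : ℤ} {t : ℝ} :
    t ∈ dyadic k j ↔ (j:ℝ) - 1 ≤ t * 2 ^ k ∧ t * 2 ^ k < j := by
  simp only [dyadic, Set.mem_Ico, div_le_iff₀ (two_pow_pos' k), lt_div_iff₀ (two_pow_pos' k)]

lemma dyadic_nonempty (k : ℕ) (j : ℤ) : (dyadic k j).Nonempty := by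
  refine Set.nonempty_Ico.2 ?_
  have := two_pow_pos' k
  rw [div_lt_div_iff₀ this this]
  nlinarith

lemma dyadic_subset_iff {k k' : ℕ} {j j' : ℤ} :
    dyadic k j ⊆ dyadic k' j' ↔
      ((j':ℝ) - 1) / 2 ^ k' ≤ ((j:ℝ) - 1) / 2 ^ k ∧ (j:ℝ) / 2 ^ k ≤ (j':ℝ) / 2 ^ k' := by
  unfold dyadic
  rw [Set.Ico_subset_Ico_iff]
  have := two_pow_pos' k
  rw [div_lt_div_iff₀ this this]; nlinarith

/-- same-level membership determines the index -/
lemma dyadic_mem_unique {k : ℕ} {j j' : ℤ} {t : ℝ} (h1 : t ∈ dyadic k j)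
    (h2 : t ∈ dyadic k j') : j = j' := by
  rw [mem_dyadic_iff] at h1 h2
  have : (j:ℝ) < j' + 1 := by linarith
  have h3 : j < j' + 1 := by exact_mod_cast this
  have : (j':ℝ) < j + 1 := by linarith
  have h4 : j' < j + 1 := by exact_mod_cast this
  omega

lemma dyadic_subset_of_le {k k' : ℕ} {j j' : ℤ} (hk : k' ≤ k)
    (hne : (dyadic k j ∩ dyadic k' j').Nonempty) : dyadic k j ⊆ dyadic k' j' := by
  obtain ⟨t, ht1, ht2⟩ := hne
  rw [mem_dyadic_iff] at ht1 ht2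
  obtain ⟨e, rfl⟩ : ∃ e, k = k' + e := ⟨k - k', by omega⟩
  have hpe : (0:ℝ) < 2 ^ e := two_pow_pos' e
  have hpk : (0:ℝ) < 2 ^ k' := two_pow_pos' k'
  have hsplit : (2:ℝ) ^ (k' + e) = 2 ^ k' * 2 ^ e := pow_add 2 k' e
  -- integer inequalities
  have e1 : ((j':ℝ) - 1) * 2 ^ e < j := by
    have : ((j':ℝ) - 1) * 2 ^ e ≤ t * 2 ^ k' * 2 ^ e := by nlinarith [ht2.1]
    calc ((j':ℝ) - 1) * 2 ^ e ≤ t * 2 ^ k' * 2 ^ e := this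
      _ = t * 2 ^ (k' + e) := by rw [hsplit]; ring
      _ < j := ht1.2
  have e2 : ((j:ℝ) - 1) < (j':ℝ) * 2 ^ e := by
    have : t * 2 ^ (k' + e) = t * 2 ^ k' * 2 ^ e := by rw [hsplit]; ring
    nlinarith [ht1.1, ht2.2]
  -- to integers
  have i1 : (j' - 1) * 2 ^ e < j := by exact_mod_cast (by push_cast; convert e1 using 2 <;> push_cast <;> ring : ((j' - 1 : ℤ):ℝ) * (2:ℝ) ^ e < (j:ℝ))
  have i2 : (j : ℤ) - 1 < j' * 2 ^ e := by exact_mod_cast (by push_cast; convert e2 using 2 <;> push_cast <;> ring : ((j:ℤ):ℝ) - 1 < ((j' : ℤ):ℝ) * (2:ℝ) ^ e)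
  have i1' : (j' - 1) * 2 ^ e ≤ j - 1 := by omega
  have i2' : j ≤ j' * 2 ^ e := by omega
  rw [dyadic_subset_iff]
  constructor
  · rw [div_le_div_iff₀ (two_pow_pos' k') (two_pow_pos' (k' + e)), hsplit]
    have : ((j':ℝ) - 1) * 2 ^ e ≤ (j:ℝ) - 1 := by exact_mod_cast i1'
    nlinarith
  · rw [div_le_div_iff₀ (two_pow_pos' (k' + e)) (two_pow_pos' k'), hsplit]
    have : (j:ℝ) ≤ (j':ℝ) * 2 ^ e := by exact_mod_cast i2'
    nlinarith

lemma dyadic_nested_or_disjoint {k k' : ℕ} {j j' : ℤ}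
    (hne : (dyadic k j ∩ dyadic k' j').Nonempty) :
    dyadic k j ⊆ dyadic k' j' ∨ dyadic k' j' ⊆ dyadic k j := by
  rcases le_total k' k with h | h
  · exact Or.inl (dyadic_subset_of_le h hne)
  · exact Or.inr (dyadic_subset_of_le h (by rwa [Set.inter_comm] at hne))

lemma dyadic_subset_level {k k' : ℕ} {j j' : ℤ} (h : dyadic k j ⊆ dyadic k' j') : k' ≤ k := by
  rw [dyadic_subset_iff] at h
  obtain ⟨h1, h2⟩ := h
  have hpk := two_pow_pos' k
  have hpk' := two_pow_pos' k'
  have : (1:ℝ) / 2 ^ k ≤ 1 / 2 ^ k' := by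
    have e1 : ((j:ℝ)) / 2 ^ k - ((j:ℝ) - 1) / 2 ^ k = 1 / 2 ^ k := by field_simp; ring
    have e2 : ((j':ℝ)) / 2 ^ k' - ((j':ℝ) - 1) / 2 ^ k' = 1 / 2 ^ k' := by field_simp; ring
    linarith
  have h2k : (2:ℝ) ^ k' ≤ 2 ^ k := by
    rw [div_le_div_iff₀ hpk hpk'] at this; linarith
  have hn : (2:ℕ) ^ k' ≤ 2 ^ k := by exact_mod_cast h2k
  exact (Nat.pow_le_pow_iff_right (by norm_num : 1 < 2)).1 hn

lemma dyadic_subset_self_level {k : ℕ} {j j' : ℤ} (h : dyadic k j ⊆ dyadic k j') : j = j' := by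
  obtain ⟨t, ht⟩ := dyadic_nonempty k j
  exact dyadic_mem_unique ht (h ht)

lemma dyadic_eq_iff {k k' : ℕ} {j j' : ℤ} (h : dyadic k j = dyadic k' j') : k = k' ∧ j = j' := by
  have h1 : k' ≤ k := dyadic_subset_level h.le
  have h2 : k ≤ k' := dyadic_subset_level h.ge
  have hk : k = k' := le_antisymm h2 h1
  subst hk
  exact ⟨rfl, dyadic_subset_self_level h.le⟩

/-- halving: t ∈ Δ_k^{(j)} ↔ t in one of the two halves -/
lemma dyadic_split {k : ℕ} {j : ℤ} {t : ℝ} :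
    t ∈ dyadic k j ↔ t ∈ dyadic (k+1) (2*j - 1) ∨ t ∈ dyadic (k+1) (2*j) := by
  simp only [mem_dyadic_iff, pow_succ]
  push_cast
  constructor
  · rintro ⟨h1, h2⟩
    rcases lt_or_ge (t * (2 ^ k * 2)) (2*(j:ℝ) - 1) with h | h
    · left; constructor <;> nlinarith
    · right; constructor <;> nlinarith
  · rintro (⟨h1, h2⟩ | ⟨h1, h2⟩) <;> constructor <;> nlinarith

lemma dyadic_half_left {k : ℕ} {j : ℤ} : dyadic (k+1) (2*j - 1) ⊆ dyadic k j := by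
  intro t ht; exact dyadic_split.2 (Or.inl ht)

lemma dyadic_half_right {k : ℕ} {j : ℤ} : dyadic (k+1) (2*j) ⊆ dyadic k j := by
  intro t ht; exact dyadic_split.2 (Or.inr ht)

lemma dyadic_shift {k : ℕ} {j c : ℤ} {t : ℝ} :
    t ∈ dyadic k (j + c) ↔ t - (c:ℝ) / 2 ^ k ∈ dyadic k j := by
  have hp := two_pow_pos' k
  simp only [mem_dyadic_iff]
  have : (t - (c:ℝ) / 2 ^ k) * 2 ^ k = t * 2 ^ k - c := by field_simp
  rw [this]
  push_cast
  constructor <;> rintro ⟨h1, h2⟩ <;> constructor <;> linarith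

lemma dyadic_subset_unit {k : ℕ} {j : ℤ} (h1 : 1 ≤ j) (h2 : j ≤ 2 ^ k) :
    dyadic k j ⊆ Set.Ico (0:ℝ) 1 := by
  intro t ht
  rw [mem_dyadic_iff] at ht
  have hp := two_pow_pos' k
  have c1 : (1:ℝ) ≤ j := by exact_mod_cast h1
  have c2 : (j:ℝ) ≤ 2 ^ k := by exact_mod_cast (by push_cast; exact_mod_cast h2 : (j:ℝ) ≤ ((2:ℤ)^k : ℤ))
  constructor
  · nlinarith [ht.1]
  · nlinarith [ht.2]

end Lemmas
section PhiLemmas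

lemma memA_iff_add {h : ℕ} {i : ℤ} {t : ℝ} :
    t ∈ dyadic (h+1) (4*i - 2) ↔ t + 1 / 2 ^ (h+1) ∈ dyadic (h+1) (4*i - 1) := by
  have hp := two_pow_pos' (h+1)
  simp only [mem_dyadic_iff]
  have : (t + 1 / 2 ^ (h+1)) * 2 ^ (h+1) = t * 2 ^ (h+1) + 1 := by field_simp
  rw [this]
  push_cast
  constructor <;> rintro ⟨a, b⟩ <;> constructor <;> linarith

lemma AB_disjoint {h : ℕ} {i : ℤ} {t : ℝ} (hA : t ∈ dyadic (h+1) (4*i - 2))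
    (hB : t ∈ dyadic (h+1) (4*i - 1)) : False := by
  have := dyadic_mem_unique hA hB; omega

lemma phi_of_memA {h : ℕ} {i : ℤ} {t : ℝ} (hA : t ∈ dyadic (h+1) (4*i - 2)) :
    phi h i t = t + 1 / 2 ^ (h+1) := by simp [phi, hA]

lemma phi_of_memB {h : ℕ} {i : ℤ} {t : ℝ} (hB : t ∈ dyadic (h+1) (4*i - 1)) :
    phi h i t = t - 1 / 2 ^ (h+1) := by
  have hA : t ∉ dyadic (h+1) (4*i - 2) := fun hA => AB_disjoint hA hB
  simp [phi, hA, hB]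

lemma phi_of_not_mem {h : ℕ} {i : ℤ} {t : ℝ} (hA : t ∉ dyadic (h+1) (4*i - 2))
    (hB : t ∉ dyadic (h+1) (4*i - 1)) : phi h i t = t := by simp [phi, hA, hB]

lemma memB_phi_mem {h : ℕ} {i : ℤ} {t : ℝ} (hB : t ∈ dyadic (h+1) (4*i - 1)) :
    phi h i t ∈ dyadic (h+1) (4*i - 2) := by
  rw [phi_of_memB hB, memA_iff_add, sub_add_cancel]; exact hB

lemma memA_phi_mem {h : ℕ} {i : ℤ} {t : ℝ} (hA : t ∈ dyadic (h+1) (4*i - 2)) :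
    phi h i t ∈ dyadic (h+1) (4*i - 1) := by
  rw [phi_of_memA hA]; exact memA_iff_add.1 hA

lemma phi_invol (h : ℕ) (i : ℤ) (t : ℝ) : phi h i (phi h i t) = t := by
  by_cases hA : t ∈ dyadic (h+1) (4*i - 2)
  · rw [phi_of_memB (memA_phi_mem hA), phi_of_memA hA]; ring
  by_cases hB : t ∈ dyadic (h+1) (4*i - 1)
  · rw [phi_of_memA (memB_phi_mem hB), phi_of_memB hB]; ring
  · rw [phi_of_not_mem hA hB, phi_of_not_mem hA hB]

/-- invariance of supersets of both swapped intervals -/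
lemma phi_mem_iff_superset {h : ℕ} {i : ℤ} {S : Set ℝ}
    (hA : dyadic (h+1) (4*i - 2) ⊆ S) (hB : dyadic (h+1) (4*i - 1) ⊆ S) (t : ℝ) :
    phi h i t ∈ S ↔ t ∈ S := by
  by_cases hA' : t ∈ dyadic (h+1) (4*i - 2)
  · simp [hB (memA_phi_mem hA'), hA hA']
  by_cases hB' : t ∈ dyadic (h+1) (4*i - 1)
  · simp [hA (memB_phi_mem hB'), hB hB']
  · rw [phi_of_not_mem hA' hB']

/-- invariance of sets disjoint from both swapped intervals -/
lemma phi_mem_iff_disjoint {h : ℕ} {i : ℤ} {S : Set ℝ}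
    (hA : ∀ s ∈ dyadic (h+1) (4*i - 2), s ∉ S) (hB : ∀ s ∈ dyadic (h+1) (4*i - 1), s ∉ S)
    (t : ℝ) : phi h i t ∈ S ↔ t ∈ S := by
  by_cases hA' : t ∈ dyadic (h+1) (4*i - 2)
  · simp [hB _ (memA_phi_mem hA'), hA _ hA']
  by_cases hB' : t ∈ dyadic (h+1) (4*i - 1)
  · simp [hA _ (memB_phi_mem hB'), hB _ hB']
  · rw [phi_of_not_mem hA' hB']

lemma A_subset_unit {h : ℕ} {i : ℤ} (hi : memD (h, i)) :
    dyadic (h+1) (4*i - 2) ⊆ Set.Ico (0:ℝ) 1 := by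
  obtain ⟨h1, h2, h3⟩ := hi
  simp only at h1 h2 h3
  refine dyadic_subset_unit (by omega) ?_
  have : (2:ℤ) ^ (h - 1) * 4 ≤ 2 ^ (h+1) := by
    obtain ⟨h', rfl⟩ : ∃ h', h = h' + 1 := ⟨h - 1, by omega⟩
    simp [pow_succ]; ring_nf; omega
  omega

lemma B_subset_unit {h : ℕ} {i : ℤ} (hi : memD (h, i)) :
    dyadic (h+1) (4*i - 1) ⊆ Set.Ico (0:ℝ) 1 := by
  obtain ⟨h1, h2, h3⟩ := hi
  simp only at h1 h2 h3
  refine dyadic_subset_unit (by omega) ?_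
  have : (2:ℤ) ^ (h - 1) * 4 ≤ 2 ^ (h+1) := by
    obtain ⟨h', rfl⟩ : ∃ h', h = h' + 1 := ⟨h - 1, by omega⟩
    simp [pow_succ]; ring_nf; omega
  omega

lemma phi_mem_unit {h : ℕ} {i : ℤ} (hi : memD (h, i)) {t : ℝ}
    (ht : t ∈ Set.Ico (0:ℝ) 1) : phi h i t ∈ Set.Ico (0:ℝ) 1 := by
  by_cases hA' : t ∈ dyadic (h+1) (4*i - 2)
  · exact B_subset_unit hi (memA_phi_mem hA')
  by_cases hB' : t ∈ dyadic (h+1) (4*i - 1)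
  · exact A_subset_unit hi (memB_phi_mem hB')
  · rwa [phi_of_not_mem hA' hB']

lemma A_subset_parent {h : ℕ} {i : ℤ} (hh : 1 ≤ h) :
    dyadic (h+1) (4*i - 2) ⊆ dyadic (h - 1) i := by
  obtain ⟨h', rfl⟩ : ∃ h', h = h' + 1 := ⟨h - 1, by omega⟩
  simp only [Nat.add_sub_cancel]
  have e1 : (4*i - 2) = 2 * (2*i - 1) := by ring
  have e2 : (h' + 1 + 1) = (h' + 1) + 1 := rfl
  rw [e1]
  refine subset_trans dyadic_half_right ?_
  exact dyadic_half_left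

lemma B_subset_parent {h : ℕ} {i : ℤ} (hh : 1 ≤ h) :
    dyadic (h+1) (4*i - 1) ⊆ dyadic (h - 1) i := by
  obtain ⟨h', rfl⟩ : ∃ h', h = h' + 1 := ⟨h - 1, by omega⟩
  simp only [Nat.add_sub_cancel]
  have e1 : (4*i - 1) = 2 * (2*i) - 1 := by ring
  rw [e1]
  exact subset_trans dyadic_half_left dyadic_half_right

end PhiLemmas
section RelabelLemmas

lemma dyadic_subset_level_eq {k k' : ℕ} {j j' : ℤ} (hs : dyadic k j ⊆ dyadic k' j')
    (hl : k' = k) : j = j' := by subst hl; exact dyadic_subset_self_level hs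

lemma shift_cast {h k : ℕ} (hk : h + 2 ≤ k) :
    ((2:ℝ) ^ (k - h - 2)) / 2 ^ (k - 1) = 1 / 2 ^ (h + 1) := by
  rw [div_eq_div_iff (by positivity) (by positivity), one_mul, ← pow_add]
  congr 1; omega

lemma relabel_fst (h : ℕ) (i : ℤ) (kj : ℕ × ℤ) : (relabel h i kj).1 = kj.1 := by
  unfold relabel; split_ifs <;> rfl

lemma subsetA_level {h k : ℕ} {i j : ℤ}
    (hsA : dyadic (k - 1) j ⊆ dyadic (h + 1) i) : h + 2 ≤ k := by
  have := dyadic_subset_level hsA; omega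

lemma shiftA_mem {h k : ℕ} {j : ℤ} (hk : h + 2 ≤ k) (t : ℝ) :
    t ∈ dyadic (k-1) (j + 2 ^ (k - h - 2)) ↔ t - 1 / 2 ^ (h+1) ∈ dyadic (k-1) j := by
  rw [dyadic_shift]
  have : ((2 ^ (k - h - 2) : ℤ) : ℝ) / 2 ^ (k - 1) = 1 / 2 ^ (h+1) := by
    push_cast; exact shift_cast hk
  rw [this]

lemma shiftB_mem {h k : ℕ} {j : ℤ} (hk : h + 2 ≤ k) (t : ℝ) :
    t ∈ dyadic (k-1) (j - 2 ^ (k - h - 2)) ↔ t + 1 / 2 ^ (h+1) ∈ dyadic (k-1) j := by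
  have e : j - 2 ^ (k - h - 2) = j + (-(2 ^ (k - h - 2))) := by ring
  rw [e, dyadic_shift]
  have : ((-(2 ^ (k - h - 2)) : ℤ) : ℝ) / 2 ^ (k - 1) = -(1 / 2 ^ (h+1)) := by
    push_cast; rw [neg_div, shift_cast hk]
  rw [this, sub_neg_eq_add]

lemma shiftA_subsetB {h k : ℕ} {i j : ℤ}
    (hsA : dyadic (k-1) j ⊆ dyadic (h+1) (4*i - 2)) :
    ∀ t, t ∈ dyadic (k-1) (j + 2 ^ (k - h - 2)) → t ∈ dyadic (h+1) (4*i - 1) := by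
  intro t ht
  have hk := subsetA_level hsA
  have h2 : t - 1 / 2 ^ (h+1) ∈ dyadic (h+1) (4*i - 2) := hsA ((shiftA_mem hk t).1 ht)
  have := memA_iff_add.1 h2
  rwa [sub_add_cancel] at this

lemma shiftB_subsetA {h k : ℕ} {i j : ℤ}
    (hsB : dyadic (k-1) j ⊆ dyadic (h+1) (4*i - 1)) :
    ∀ t, t ∈ dyadic (k-1) (j - 2 ^ (k - h - 2)) → t ∈ dyadic (h+1) (4*i - 2) := by
  intro t ht
  have hk := subsetA_level hsB
  have h2 : t + 1 / 2 ^ (h+1) ∈ dyadic (h+1) (4*i - 1) := hsB ((shiftB_mem hk t).1 ht)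
  exact memA_iff_add.2 h2

lemma Ico_unit_eq : Set.Ico (0:ℝ) 1 = dyadic 0 1 := by
  simp [dyadic]

lemma index_bounds_of_subset_unit {k : ℕ} {j : ℤ}
    (h : dyadic k j ⊆ Set.Ico (0:ℝ) 1) : 1 ≤ j ∧ j ≤ 2 ^ k := by
  rw [Ico_unit_eq] at h
  rw [dyadic_subset_iff] at h
  obtain ⟨h1, h2⟩ := h
  have hp := two_pow_pos' k
  simp only [pow_zero, div_one] at h1 h2
  norm_num at h1
  have e1 : ((j:ℝ)-1)/2^k * 2^k = (j:ℝ)-1 := div_mul_cancel₀ _ (ne_of_gt hp)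
  have e2 : (j:ℝ)/2^k * 2^k = (j:ℝ) := div_mul_cancel₀ _ (ne_of_gt hp)
  have c1 : (1:ℝ) ≤ (j:ℝ) := by nlinarith
  have c2 : (j:ℝ) ≤ 2^k := by nlinarith
  constructor
  · exact_mod_cast c1
  · exact_mod_cast (by push_cast; exact c2 : (j:ℝ) ≤ ((2:ℤ)^k : ℤ))

lemma relabel_memD {h : ℕ} {i : ℤ} (hhi : memD (h, i)) {kj : ℕ × ℤ} (hkj : memD kj) :
    memD (relabel h i kj) := by
  obtain ⟨k, j⟩ := kj
  obtain ⟨hk1, hj1, hj2⟩ := hkj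
  simp only at hk1 hj1 hj2
  unfold relabel
  split_ifs with hsA hsB
  · have hk := subsetA_level hsA
    have hsub : dyadic (k-1) (j + 2 ^ (k - h - 2)) ⊆ Set.Ico (0:ℝ) 1 :=
      fun t ht => B_subset_unit hhi (shiftA_subsetB hsA t ht)
    obtain ⟨b1, b2⟩ := index_bounds_of_subset_unit hsub
    exact ⟨hk1, b1, b2⟩
  · have hk := subsetA_level hsB
    have hsub : dyadic (k-1) (j - 2 ^ (k - h - 2)) ⊆ Set.Ico (0:ℝ) 1 :=
      fun t ht => A_subset_unit hhi (shiftB_subsetA hsB t ht)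
    obtain ⟨b1, b2⟩ := index_bounds_of_subset_unit hsub
    exact ⟨hk1, b1, b2⟩
  · exact ⟨hk1, hj1, hj2⟩

lemma relabel_eq_self_of_level {h : ℕ} {i : ℤ} {kj : ℕ × ℤ} (hl : kj.1 ≤ h + 1) :
    relabel h i kj = kj := by
  unfold relabel
  split_ifs with hsA hsB
  · exact absurd (subsetA_level hsA) (by omega)
  · exact absurd (subsetA_level hsB) (by omega)
  · rfl

end RelabelLemmas
section RelabelSpec

lemma relabel_spec {h : ℕ} {i : ℤ} (hhi : memD (h, i)) {kj : ℕ × ℤ} (hkj : memD kj)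
    (hne1 : kj ≠ (h + 1, 2*i - 1)) (hne2 : kj ≠ (h + 1, 2*i)) (t : ℝ) :
    t ∈ dyadic ((relabel h i kj).1 - 1) (relabel h i kj).2 ↔
      phi h i t ∈ dyadic (kj.1 - 1) kj.2 := by
  obtain ⟨k, j⟩ := kj
  simp only at hne1 hne2 ⊢
  unfold relabel
  split_ifs with hsA hsB
  · -- Δ ⊆ A : relabel to (k, j + 2^(k-h-2))
    simp only
    have hk := subsetA_level hsA
    constructor
    · intro ht
      have hB : t ∈ dyadic (h+1) (4*i - 1) := shiftA_subsetB hsA t ht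
      rw [phi_of_memB hB]
      exact (shiftA_mem hk t).1 ht
    · intro ht
      by_cases hA' : t ∈ dyadic (h+1) (4*i - 2)
      · exact absurd (hsA ht) (fun hc => AB_disjoint hc (memA_phi_mem hA'))
      by_cases hB' : t ∈ dyadic (h+1) (4*i - 1)
      · rw [phi_of_memB hB'] at ht
        exact (shiftA_mem hk t).2 ht
      · rw [phi_of_not_mem hA' hB'] at ht
        exact absurd (hsA ht) hA'
  · -- Δ ⊆ B : relabel to (k, j - 2^(k-h-2))
    simp only
    have hk := subsetA_level hsB
    constructor
    · intro ht
      have hA : t ∈ dyadic (h+1) (4*i - 2) := shiftB_subsetA hsB t ht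
      rw [phi_of_memA hA]
      exact (shiftB_mem hk t).1 ht
    · intro ht
      by_cases hA' : t ∈ dyadic (h+1) (4*i - 2)
      · rw [phi_of_memA hA'] at ht
        exact (shiftB_mem hk t).2 ht
      by_cases hB' : t ∈ dyadic (h+1) (4*i - 1)
      · exact absurd (hsB ht) (fun hc => AB_disjoint (memB_phi_mem hB') hc)
      · rw [phi_of_not_mem hA' hB'] at ht
        exact absurd (hsB ht) hB'
  · -- Δ not contained in A nor B : invariance
    simp only
    have hh1 : 1 ≤ h := hhi.1
    have hk1 : 1 ≤ k := hkj.1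
    by_cases hiA : (dyadic (k-1) j ∩ dyadic (h+1) (4*i - 2)).Nonempty
    · have hAin : dyadic (h+1) (4*i - 2) ⊆ dyadic (k-1) j :=
        (dyadic_nested_or_disjoint hiA).resolve_left hsA
      by_cases hiB : (dyadic (k-1) j ∩ dyadic (h+1) (4*i - 1)).Nonempty
      · have hBin : dyadic (h+1) (4*i - 1) ⊆ dyadic (k-1) j :=
          (dyadic_nested_or_disjoint hiB).resolve_left hsB
        exact (phi_mem_iff_superset hAin hBin t).symm
      · exfalso
        have hAP : dyadic (h+1) (4*i - 2) ⊆ dyadic h (2*i - 1) := by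
          have e1 : (4*i - 2) = 2 * (2*i - 1) := by ring
          rw [e1]; exact dyadic_half_right
        obtain ⟨t₀, ht₀⟩ := dyadic_nonempty (h+1) (4*i - 2)
        have hΔP : (dyadic (k-1) j ∩ dyadic h (2*i - 1)).Nonempty :=
          ⟨t₀, hAin ht₀, hAP ht₀⟩
        rcases dyadic_nested_or_disjoint hΔP with hΔsubP | hPsubΔ
        · -- Δ ⊆ P
          have l1 : h ≤ k - 1 := dyadic_subset_level hΔsubP
          have l2 : k - 1 ≤ h + 1 := dyadic_subset_level hAin
          rcases (by omega : k - 1 = h ∨ k - 1 = h + 1) with hl | hl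
          · exact hne1 (by
              have := dyadic_subset_level_eq hΔsubP hl.symm
              exact Prod.ext (by omega) this)
          · have hj : 4*i - 2 = j := dyadic_subset_level_eq hAin hl
            exact hsA (by rw [hl, hj])
        · -- P ⊆ Δ
          have hPQ : dyadic h (2*i - 1) ⊆ dyadic (h-1) i := by
            obtain ⟨h', rfl⟩ : ∃ h', h = h' + 1 := ⟨h - 1, by omega⟩
            simpa using dyadic_half_left
          obtain ⟨s₀, hs₀⟩ := dyadic_nonempty h (2*i - 1)
          have hΔQ : (dyadic (k-1) j ∩ dyadic (h-1) i).Nonempty :=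
            ⟨s₀, hPsubΔ hs₀, hPQ hs₀⟩
          rcases dyadic_nested_or_disjoint hΔQ with hΔsubQ | hQsubΔ
          · have l1 : h - 1 ≤ k - 1 := dyadic_subset_level hΔsubQ
            have l2 : k - 1 ≤ h := dyadic_subset_level hPsubΔ
            rcases (by omega : k - 1 = h ∨ k - 1 = h - 1) with hl | hl
            · exact hne1 (by
                have := dyadic_subset_level_eq hPsubΔ hl
                exact Prod.ext (by omega) this.symm)
            · have hj : j = i := dyadic_subset_level_eq hΔsubQ hl.symm
              obtain ⟨u₀, hu₀⟩ := dyadic_nonempty (h+1) (4*i - 1)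
              exact hiB ⟨u₀, by rw [hl, hj]; exact B_subset_parent hh1 hu₀, hu₀⟩
          · obtain ⟨u₀, hu₀⟩ := dyadic_nonempty (h+1) (4*i - 1)
            exact hiB ⟨u₀, hQsubΔ (B_subset_parent hh1 hu₀), hu₀⟩
    · by_cases hiB : (dyadic (k-1) j ∩ dyadic (h+1) (4*i - 1)).Nonempty
      · have hBin : dyadic (h+1) (4*i - 1) ⊆ dyadic (k-1) j :=
          (dyadic_nested_or_disjoint hiB).resolve_left hsB
        exfalso
        have hBP : dyadic (h+1) (4*i - 1) ⊆ dyadic h (2*i) := by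
          have e1 : (4*i - 1) = 2 * (2*i) - 1 := by ring
          rw [e1]; exact dyadic_half_left
        obtain ⟨t₀, ht₀⟩ := dyadic_nonempty (h+1) (4*i - 1)
        have hΔP : (dyadic (k-1) j ∩ dyadic h (2*i)).Nonempty :=
          ⟨t₀, hBin ht₀, hBP ht₀⟩
        rcases dyadic_nested_or_disjoint hΔP with hΔsubP | hPsubΔ
        · have l1 : h ≤ k - 1 := dyadic_subset_level hΔsubP
          have l2 : k - 1 ≤ h + 1 := dyadic_subset_level hBin
          rcases (by omega : k - 1 = h ∨ k - 1 = h + 1) with hl | hl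
          · exact hne2 (by
              have := dyadic_subset_level_eq hΔsubP hl.symm
              exact Prod.ext (by omega) this)
          · have hj : 4*i - 1 = j := dyadic_subset_level_eq hBin hl
            exact hsB (by rw [hl, hj])
        · have hPQ : dyadic h (2*i) ⊆ dyadic (h-1) i := by
            obtain ⟨h', rfl⟩ : ∃ h', h = h' + 1 := ⟨h - 1, by omega⟩
            simpa using dyadic_half_right
          obtain ⟨s₀, hs₀⟩ := dyadic_nonempty h (2*i)
          have hΔQ : (dyadic (k-1) j ∩ dyadic (h-1) i).Nonempty :=
            ⟨s₀, hPsubΔ hs₀, hPQ hs₀⟩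
          rcases dyadic_nested_or_disjoint hΔQ with hΔsubQ | hQsubΔ
          · have l1 : h - 1 ≤ k - 1 := dyadic_subset_level hΔsubQ
            have l2 : k - 1 ≤ h := dyadic_subset_level hPsubΔ
            rcases (by omega : k - 1 = h ∨ k - 1 = h - 1) with hl | hl
            · exact hne2 (by
                have := dyadic_subset_level_eq hPsubΔ hl
                exact Prod.ext (by omega) this.symm)
            · have hj : j = i := dyadic_subset_level_eq hΔsubQ hl.symm
              obtain ⟨u₀, hu₀⟩ := dyadic_nonempty (h+1) (4*i - 2)
              exact hiA ⟨u₀, by rw [hl, hj]; exact A_subset_parent hh1 hu₀, hu₀⟩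
          · obtain ⟨u₀, hu₀⟩ := dyadic_nonempty (h+1) (4*i - 2)
            exact hiA ⟨u₀, hQsubΔ (A_subset_parent hh1 hu₀), hu₀⟩
      · refine (phi_mem_iff_disjoint ?_ ?_ t).symm
        · exact fun s hs hΔ => hiA ⟨s, hΔ, hs⟩
        · exact fun s hs hΔ => hiB ⟨s, hΔ, hs⟩

end RelabelSpec
section PhiTLemmas

lemma child_not_mem_image {h : ℕ} {i : ℤ} {G : Finset (ℕ × ℤ)}
    (hadm : admissible G (h, i)) {c : ℕ × ℤ} (hc1 : c.1 = h + 1) (hcG : c ∉ G) :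
    c ∉ (G.erase (h, i)).image (relabel h i) := by
  intro hc
  obtain ⟨x, hx, hxc⟩ := Finset.mem_image.1 hc
  have h0 := relabel_fst h i x
  rw [hxc] at h0
  have hx1 : x.1 ≤ h + 1 := by omega
  have := relabel_eq_self_of_level (i := i) hx1
  rw [this] at hxc
  exact hcG (hxc ▸ (Finset.mem_of_mem_erase hx))

lemma relabel_injOn {h : ℕ} {i : ℤ} {G : Finset (ℕ × ℤ)} (hG : ∀ x ∈ G, memD x)
    (hadm : admissible G (h, i)) :
    Set.InjOn (relabel h i) (G.erase (h, i)) := by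
  intro x hx y hy hxy
  have hxG := Finset.mem_of_mem_erase (Finset.mem_coe.1 hx)
  have hyG := Finset.mem_of_mem_erase (Finset.mem_coe.1 hy)
  have hhi : memD (h, i) := hG _ hadm.1
  have hch1 : (h+1, 2*i - 1) ∉ G := hadm.2.1
  have hch2 : (h+1, 2*i) ∉ G := hadm.2.2
  have hnex1 : x ≠ (h+1, 2*i - 1) := fun he => hch1 (he ▸ hxG)
  have hnex2 : x ≠ (h+1, 2*i) := fun he => hch2 (he ▸ hxG)
  have hney1 : y ≠ (h+1, 2*i - 1) := fun he => hch1 (he ▸ hyG)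
  have hney2 : y ≠ (h+1, 2*i) := fun he => hch2 (he ▸ hyG)
  have e1 := relabel_fst h i x
  have e2 := relabel_fst h i y
  rw [hxy] at e1
  have hlvl : x.1 = y.1 := by omega
  obtain ⟨t₀, ht₀⟩ := dyadic_nonempty ((relabel h i x).1 - 1) (relabel h i x).2
  have h1 := (relabel_spec hhi (hG _ hxG) hnex1 hnex2 t₀).1 ht₀
  have h2 := (relabel_spec hhi (hG _ hyG) hney1 hney2 t₀).1 (hxy ▸ ht₀)
  have hsnd : x.2 = y.2 := dyadic_mem_unique h1 (by rw [hlvl]; exact h2)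
  exact Prod.ext hlvl hsnd

lemma branchCount_PhiT {h : ℕ} {i : ℤ} {G : Finset (ℕ × ℤ)} (hG : ∀ x ∈ G, memD x)
    (hadm : admissible G (h, i)) (t : ℝ) :
    branchCount (PhiT h i G) t = branchCount G (phi h i t) := by
  classical
  have hhi : memD (h, i) := hG _ hadm.1
  have hh1 : 1 ≤ h := hhi.1
  set c1 : ℕ × ℤ := (h + 1, 2*i - 1) with hc1def
  set c2 : ℕ × ℤ := (h + 1, 2*i) with hc2def
  have hch1 : c1 ∉ G := hadm.2.1
  have hch2 : c2 ∉ G := hadm.2.2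
  set S := (G.erase (h, i)).image (relabel h i) with hSdef
  have hc1S : c1 ∉ S := child_not_mem_image hadm rfl hch1
  have hc2S : c2 ∉ S := child_not_mem_image hadm rfl hch2
  have hc12 : c1 ≠ c2 := by
    intro he
    have h2 : (2*i - 1 : ℤ) = 2*i := (Prod.ext_iff.1 he).2
    omega
  set P : ℕ × ℤ → Prop := fun kj => t ∈ dyadic (kj.1 - 1) kj.2 with hPdef
  set P' : ℕ × ℤ → Prop := fun kj => phi h i t ∈ dyadic (kj.1 - 1) kj.2 with hP'def
  have hins : ∀ (s : Finset (ℕ × ℤ)) (c : ℕ × ℤ), c ∉ s →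
      (Finset.filter P (insert c s)).card
        = (if P c then 1 else 0) + (Finset.filter P s).card := by
    intro s c hc
    rw [Finset.filter_insert]
    split_ifs with hPc
    · rw [Finset.card_insert_of_notMem (fun hmem => hc (Finset.mem_of_mem_filter _ hmem))]
      omega
    · omega
  have hc1in : c1 ∉ insert c2 S := by
    simp only [Finset.mem_insert]
    push_neg
    exact ⟨hc12, hc1S⟩
  have step1 : branchCount (PhiT h i G) t
      = (if P c1 then 1 else 0) + ((if P c2 then 1 else 0) + (Finset.filter P S).card) := by
    unfold branchCount PhiT
    rw [← hSdef, ← hc1def, ← hc2def]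
    rw [hins _ c1 hc1in, hins _ c2 hc2S]
  have step2 : (Finset.filter P S).card
      = (Finset.filter P' (G.erase (h, i))).card := by
    rw [hSdef, Finset.filter_image]
    rw [Finset.card_image_of_injOn]
    · congr 1
      apply Finset.filter_congr
      intro x hx
      have hxG := Finset.mem_of_mem_erase hx
      have hnex1 : x ≠ c1 := fun he => hch1 (he ▸ hxG)
      have hnex2 : x ≠ c2 := fun he => hch2 (he ▸ hxG)
      constructor
      · intro hPx
        exact (relabel_spec hhi (hG _ hxG) hnex1 hnex2 t).1 hPx
      · intro hPx
        exact (relabel_spec hhi (hG _ hxG) hnex1 hnex2 t).2 hPx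
    · intro x hx y hy hxy
      refine relabel_injOn hG hadm ?_ ?_ hxy
      · exact Finset.mem_coe.2 (Finset.mem_of_mem_filter _ (Finset.mem_coe.1 hx))
      · exact Finset.mem_coe.2 (Finset.mem_of_mem_filter _ (Finset.mem_coe.1 hy))
  have step3 : (Finset.filter P' G).card
      = (Finset.filter P' (G.erase (h, i))).card + (if P' (h, i) then 1 else 0) := by
    rw [Finset.filter_erase]
    split_ifs with hP0
    · rw [Finset.card_erase_of_mem (Finset.mem_filter.2 ⟨hadm.1, hP0⟩)]
      have : 0 < (Finset.filter P' G).card :=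
        Finset.card_pos.2 ⟨(h, i), Finset.mem_filter.2 ⟨hadm.1, hP0⟩⟩
      omega
    · rw [Finset.erase_eq_of_notMem (fun hmem => hP0 (Finset.mem_filter.1 hmem).2)]
      omega
  have hPc1 : P c1 ↔ t ∈ dyadic h (2*i - 1) := by
    simp only [hPdef, hc1def, Nat.add_sub_cancel]
  have hPc2 : P c2 ↔ t ∈ dyadic h (2*i) := by
    simp only [hPdef, hc2def, Nat.add_sub_cancel]
  have hsplit : P' (h, i) ↔ (P c1 ∨ P c2) := by
    simp only [hP'def]
    have hAq : dyadic (h+1) (4*i - 2) ⊆ dyadic (h-1) i := A_subset_parent hh1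
    have hBq : dyadic (h+1) (4*i - 1) ⊆ dyadic (h-1) i := B_subset_parent hh1
    rw [phi_mem_iff_superset hAq hBq t]
    rw [hPc1, hPc2]
    obtain ⟨h', rfl⟩ : ∃ h', h = h' + 1 := ⟨h - 1, by omega⟩
    simp only [Nat.add_sub_cancel]
    exact dyadic_split
  have hexcl : ¬ (P c1 ∧ P c2) := by
    rintro ⟨hp1, hp2⟩
    have := dyadic_mem_unique (hPc1.1 hp1) (hPc2.1 hp2)
    omega
  have hbcG : branchCount G (phi h i t) = (Finset.filter P' G).card := rfl
  rw [step1, step2, hbcG, step3]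
  by_cases h1 : P c1
  · have hP' : P' (h, i) := hsplit.2 (Or.inl h1)
    have h2 : ¬ P c2 := fun h2 => hexcl ⟨h1, h2⟩
    rw [if_pos h1, if_neg h2, if_pos hP']
    omega
  · by_cases h2 : P c2
    · have hP' : P' (h, i) := hsplit.2 (Or.inr h2)
      rw [if_neg h1, if_pos h2, if_pos hP']
      omega
    · have hP' : ¬ P' (h, i) := fun hp => (hsplit.1 hp).elim h1 h2
      rw [if_neg h1, if_neg h2, if_neg hP']
      omega

end PhiTLemmas
section Invariants

lemma branchCount_le_card (G : Finset (ℕ × ℤ)) (t : ℝ) : branchCount G t ≤ G.card :=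
  Finset.card_filter_le _ _

lemma bddAbove_lhset (G : Finset (ℕ × ℤ)) :
    BddAbove {m | ∃ t ∈ Set.Ico (0:ℝ) 1, branchCount G t = m} := by
  refine ⟨G.card, ?_⟩
  rintro m ⟨t, _, rfl⟩
  exact branchCount_le_card G t

lemma branchCount_le_lh (G : Finset (ℕ × ℤ)) {t : ℝ} (ht : t ∈ Set.Ico (0:ℝ) 1) :
    branchCount G t ≤ lh G :=
  le_csSup (bddAbove_lhset G) ⟨t, ht, rfl⟩

lemma lh_PhiT {h : ℕ} {i : ℤ} {G : Finset (ℕ × ℤ)} (hG : ∀ x ∈ G, memD x)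
    (hadm : admissible G (h, i)) : lh (PhiT h i G) = lh G := by
  have hhi : memD (h, i) := hG _ hadm.1
  unfold lh
  congr 1
  ext m
  constructor
  · rintro ⟨t, ht, rfl⟩
    exact ⟨phi h i t, phi_mem_unit hhi ht, (branchCount_PhiT hG hadm t).symm⟩
  · rintro ⟨s, hs, rfl⟩
    refine ⟨phi h i s, phi_mem_unit hhi hs, ?_⟩
    rw [branchCount_PhiT hG hadm (phi h i s), phi_invol]

lemma memD_c1 {h : ℕ} {i : ℤ} (hhi : memD (h, i)) : memD (h + 1, 2*i - 1) := by
  obtain ⟨h1, h2, h3⟩ := hhi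
  simp only at h1 h2 h3
  obtain ⟨h', rfl⟩ : ∃ h', h = h' + 1 := ⟨h - 1, by omega⟩
  refine ⟨by omega, by omega, ?_⟩
  simp only [Nat.add_sub_cancel] at h3 ⊢
  have : (2:ℤ) ^ (h' + 1) = 2 * 2 ^ h' := by rw [pow_succ]; ring
  omega

lemma memD_c2 {h : ℕ} {i : ℤ} (hhi : memD (h, i)) : memD (h + 1, 2*i) := by
  obtain ⟨h1, h2, h3⟩ := hhi
  simp only at h1 h2 h3
  obtain ⟨h', rfl⟩ : ∃ h', h = h' + 1 := ⟨h - 1, by omega⟩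
  refine ⟨by omega, by omega, ?_⟩
  simp only [Nat.add_sub_cancel] at h3 ⊢
  have : (2:ℤ) ^ (h' + 1) = 2 * 2 ^ h' := by rw [pow_succ]; ring
  omega

lemma PhiT_memD {h : ℕ} {i : ℤ} {G : Finset (ℕ × ℤ)} (hG : ∀ x ∈ G, memD x)
    (hadm : admissible G (h, i)) : ∀ x ∈ PhiT h i G, memD x := by
  intro x hx
  have hhi : memD (h, i) := hG _ hadm.1
  unfold PhiT at hx
  rcases Finset.mem_insert.1 hx with rfl | hx
  · exact memD_c1 hhi
  rcases Finset.mem_insert.1 hx with rfl | hx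
  · exact memD_c2 hhi
  obtain ⟨y, hy, rfl⟩ := Finset.mem_image.1 hx
  exact relabel_memD hhi (hG _ (Finset.mem_of_mem_erase hy))

lemma PhiT_level_le {h M0 : ℕ} {i : ℤ} {G : Finset (ℕ × ℤ)}
    (hG : ∀ x ∈ G, x.1 ≤ M0) (hh : h + 1 ≤ M0) : ∀ x ∈ PhiT h i G, x.1 ≤ M0 := by
  intro x hx
  unfold PhiT at hx
  rcases Finset.mem_insert.1 hx with rfl | hx
  · exact hh
  rcases Finset.mem_insert.1 hx with rfl | hx
  · exact hh
  obtain ⟨y, hy, rfl⟩ := Finset.mem_image.1 hx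
  rw [relabel_fst]
  exact hG _ (Finset.mem_of_mem_erase hy)

lemma weight_PhiT_lt {h M0 : ℕ} {i : ℤ} {G : Finset (ℕ × ℤ)} (hG : ∀ x ∈ G, memD x)
    (hadm : admissible G (h, i)) (hhM : h < M0) :
    ∑ x ∈ PhiT h i G, 3 ^ (M0 - x.1) < ∑ x ∈ G, 3 ^ (M0 - x.1) := by
  classical
  set c1 : ℕ × ℤ := (h + 1, 2*i - 1) with hc1def
  set c2 : ℕ × ℤ := (h + 1, 2*i) with hc2def
  have hch1 : c1 ∉ G := hadm.2.1
  have hch2 : c2 ∉ G := hadm.2.2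
  set S := (G.erase (h, i)).image (relabel h i) with hSdef
  have hc1S : c1 ∉ S := child_not_mem_image hadm rfl hch1
  have hc2S : c2 ∉ S := child_not_mem_image hadm rfl hch2
  have hc12 : c1 ≠ c2 := by
    intro he
    have h2 : (2*i - 1 : ℤ) = 2*i := (Prod.ext_iff.1 he).2
    omega
  have hc1in : c1 ∉ insert c2 S := by
    simp only [Finset.mem_insert]; push_neg; exact ⟨hc12, hc1S⟩
  have hL : ∑ x ∈ PhiT h i G, 3 ^ (M0 - x.1)
      = 3 ^ (M0 - (h+1)) + (3 ^ (M0 - (h+1)) + ∑ x ∈ S, 3 ^ (M0 - x.1)) := by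
    unfold PhiT
    rw [← hSdef, ← hc1def, ← hc2def, Finset.sum_insert hc1in, Finset.sum_insert hc2S]
  have hS' : ∑ x ∈ S, 3 ^ (M0 - x.1) = ∑ x ∈ G.erase (h, i), 3 ^ (M0 - x.1) := by
    rw [hSdef, Finset.sum_image (fun x hx y hy hxy => relabel_injOn hG hadm hx hy hxy)]
    apply Finset.sum_congr rfl
    intro x _
    rw [relabel_fst]
  have hR : ∑ x ∈ G.erase (h, i), 3 ^ (M0 - x.1) + 3 ^ (M0 - h)
      = ∑ x ∈ G, 3 ^ (M0 - x.1) :=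
    Finset.sum_erase_add G (fun x => 3 ^ (M0 - x.1)) hadm.1
  have hpow : (3:ℕ) ^ (M0 - h) = 3 * 3 ^ (M0 - h - 1) := by
    rw [← pow_succ']
    congr 1
    omega
  have hpos : 1 ≤ (3:ℕ) ^ (M0 - h - 1) := Nat.one_le_pow _ _ (by norm_num)
  have he : M0 - (h+1) = M0 - h - 1 := by omega
  rw [hL, hS', he]
  omega

end Invariants
section FindAdmissible

lemma adm_case {G : Finset (ℕ × ℤ)} {kj : ℕ × ℤ} (hkj : kj ∈ G) (hadm : admissible G kj) :
    ∃ y ∈ G, admissible G y ∧ dyadic (y.1 - 1) y.2 ⊆ dyadic (kj.1 - 1) kj.2 ∧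
      ∀ t ∈ dyadic (y.1 - 1) y.2,
        y.1 + 1 ≤ kj.1 + (G.filter fun z => t ∈ dyadic (z.1 - 1) z.2 ∧ kj.1 ≤ z.1).card := by
  refine ⟨kj, hkj, hadm, subset_rfl, ?_⟩
  intro t ht
  have hmem : kj ∈ G.filter fun z => t ∈ dyadic (z.1 - 1) z.2 ∧ kj.1 ≤ z.1 :=
    Finset.mem_filter.2 ⟨hkj, ht, le_refl _⟩
  have : 0 < (G.filter fun z => t ∈ dyadic (z.1 - 1) z.2 ∧ kj.1 ≤ z.1).card :=
    Finset.card_pos.2 ⟨kj, hmem⟩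
  omega

lemma child_exists {G : Finset (ℕ × ℤ)} (hG : ∀ x ∈ G, memD x) {kj : ℕ × ℤ}
    (hkj : kj ∈ G) (hadm : ¬ admissible G kj) :
    ∃ c ∈ G, c.1 = kj.1 + 1 ∧ dyadic (c.1 - 1) c.2 ⊆ dyadic (kj.1 - 1) kj.2 := by
  obtain ⟨k', hk'⟩ : ∃ k', kj.1 = k' + 1 := ⟨kj.1 - 1, by have := (hG _ hkj).1; omega⟩
  have hsplit : (kj.1 + 1, 2*kj.2 - 1) ∈ G ∨ (kj.1 + 1, 2*kj.2) ∈ G := by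
    by_contra hc
    push_neg at hc
    exact hadm ⟨hkj, hc.1, hc.2⟩
  have hkmink : kj.1 - 1 = k' := by omega
  rcases hsplit with hc | hc
  · refine ⟨(kj.1 + 1, 2*kj.2 - 1), hc, rfl, ?_⟩
    simp only [Nat.add_sub_cancel, hkmink, hk']
    exact dyadic_half_left
  · refine ⟨(kj.1 + 1, 2*kj.2), hc, rfl, ?_⟩
    simp only [Nat.add_sub_cancel, hkmink, hk']
    exact dyadic_half_right

lemma exists_admissible (G : Finset (ℕ × ℤ)) (hG : ∀ x ∈ G, memD x) :
    ∀ (d : ℕ) (kj : ℕ × ℤ), kj ∈ G → (∀ z ∈ G, z.1 ≤ kj.1 + d) →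
    ∃ y ∈ G, admissible G y ∧ dyadic (y.1 - 1) y.2 ⊆ dyadic (kj.1 - 1) kj.2 ∧
      ∀ t ∈ dyadic (y.1 - 1) y.2,
        y.1 + 1 ≤ kj.1 + (G.filter fun z => t ∈ dyadic (z.1 - 1) z.2 ∧ kj.1 ≤ z.1).card := by
  intro d
  induction d with
  | zero =>
    intro kj hkj hd
    by_cases hadm : admissible G kj
    · exact adm_case hkj hadm
    · exfalso
      obtain ⟨c, hcG, hc1, _⟩ := child_exists hG hkj hadm
      have := hd c hcG
      omega
  | succ d ih =>
    intro kj hkj hd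
    by_cases hadm : admissible G kj
    · exact adm_case hkj hadm
    · obtain ⟨c, hcG, hc1, hcsub⟩ := child_exists hG hkj hadm
      obtain ⟨y, hyG, hyadm, hysub, hybd⟩ := ih c hcG (fun z hz => by
        have := hd z hz; omega)
      refine ⟨y, hyG, hyadm, hysub.trans hcsub, ?_⟩
      intro t ht
      have hb := hybd t ht
      rw [hc1] at hb
      have htkj : t ∈ dyadic (kj.1 - 1) kj.2 := hcsub (hysub ht)
      have hnot : kj ∉ G.filter fun z => t ∈ dyadic (z.1 - 1) z.2 ∧ kj.1 + 1 ≤ z.1 := by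
        intro hmem
        have := (Finset.mem_filter.1 hmem).2.2
        omega
      have hsub2 : insert kj (G.filter fun z => t ∈ dyadic (z.1 - 1) z.2 ∧ kj.1 + 1 ≤ z.1)
          ⊆ G.filter fun z => t ∈ dyadic (z.1 - 1) z.2 ∧ kj.1 ≤ z.1 := by
        intro z hz
        rcases Finset.mem_insert.1 hz with rfl | hz
        · exact Finset.mem_filter.2 ⟨hkj, htkj, le_refl _⟩
        · have := Finset.mem_filter.1 hz
          exact Finset.mem_filter.2 ⟨this.1, this.2.1, by omega⟩
      have hcard := Finset.card_le_card hsub2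
      rw [Finset.card_insert_of_notMem hnot] at hcard
      omega

end FindAdmissible
section Main

lemma mem_Dtree {a b : ℕ} {x : ℕ × ℤ} :
    x ∈ Dtree a b ↔ a ≤ x.1 ∧ x.1 ≤ b ∧ 1 ≤ x.2 ∧ x.2 ≤ 2 ^ (x.1 - 1) := by
  unfold Dtree
  simp only [Finset.mem_biUnion, Finset.mem_Icc, Finset.mem_image]
  constructor
  · rintro ⟨k, ⟨hk1, hk2⟩, j, ⟨hj1, hj2⟩, rfl⟩
    exact ⟨hk1, hk2, hj1, hj2⟩
  · rintro ⟨h1, h2, h3, h4⟩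
    exact ⟨x.1, ⟨h1, h2⟩, x.2, ⟨h3, h4⟩, rfl⟩

lemma compress_aux (n M0 : ℕ) : ∀ (w : ℕ) (G : Finset (ℕ × ℤ)),
    (∀ x ∈ G, memD x) → (∀ x ∈ G, x.1 ≤ M0) → lh G = n →
    (∑ x ∈ G, 3 ^ (M0 - x.1)) ≤ w →
    ∃ (m N : ℕ) (Gs : ℕ → Finset (ℕ × ℤ)) (his : ℕ → ℕ × ℤ),
      Gs 0 = G ∧
      (∀ l < N, admissible (Gs l) (his l) ∧ Gs (l + 1) = PhiT (his l).1 (his l).2 (Gs l)) ∧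
      Gs N ⊆ Dtree (m + 1) (m + n) := by
  have hdone : ∀ (G : Finset (ℕ × ℤ)) (m : ℕ), G ⊆ Dtree (m + 1) (m + n) →
      ∃ (m' N : ℕ) (Gs : ℕ → Finset (ℕ × ℤ)) (his : ℕ → ℕ × ℤ),
        Gs 0 = G ∧
        (∀ l < N, admissible (Gs l) (his l) ∧ Gs (l + 1) = PhiT (his l).1 (his l).2 (Gs l)) ∧
        Gs N ⊆ Dtree (m' + 1) (m' + n) := by
    intro G m hsub
    exact ⟨m, 0, fun _ => G, fun _ => (1, 1), rfl,
      fun l hl => absurd hl (Nat.not_lt_zero l), hsub⟩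
  intro w
  induction w with
  | zero =>
    intro G hmemD hlev hlh hw
    have hemp : G = ∅ := by
      by_contra hne
      obtain ⟨x, hx⟩ := Finset.nonempty_of_ne_empty hne
      have h1 : 3 ^ (M0 - x.1) ≤ ∑ y ∈ G, 3 ^ (M0 - y.1) :=
        Finset.single_le_sum (f := fun y : ℕ × ℤ => 3 ^ (M0 - y.1))
          (fun y _ => Nat.zero_le _) hx
      have h2 : 1 ≤ (3:ℕ) ^ (M0 - x.1) := Nat.one_le_pow _ _ (by norm_num)
      omega
    refine hdone G 0 ?_
    rw [hemp]
    exact Finset.empty_subset _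
  | succ w ih =>
    intro G hmemD hlev hlh hw
    rcases Finset.eq_empty_or_nonempty G with hemp | hne
    · refine hdone G 0 ?_
      rw [hemp]
      exact Finset.empty_subset _
    · have hlne : (G.image Prod.fst).Nonempty := hne.image _
      set M := (G.image Prod.fst).max' hlne with hMdef
      set h0 := (G.image Prod.fst).min' hlne with hh0def
      have hlevM : ∀ x ∈ G, x.1 ≤ M :=
        fun x hx => Finset.le_max' _ _ (Finset.mem_image_of_mem _ hx)
      have hlevh0 : ∀ x ∈ G, h0 ≤ x.1 :=
        fun x hx => Finset.min'_le _ _ (Finset.mem_image_of_mem _ hx)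
      obtain ⟨x0, hx0G, hx0⟩ : ∃ x0 ∈ G, x0.1 = h0 := by
        have := Finset.min'_mem _ hlne
        rw [← hh0def] at this
        obtain ⟨x0, hx0G, hx0⟩ := Finset.mem_image.1 this
        exact ⟨x0, hx0G, hx0⟩
      obtain ⟨xM, hxMG, hxM⟩ : ∃ xM ∈ G, xM.1 = M := by
        have := Finset.max'_mem _ hlne
        rw [← hMdef] at this
        obtain ⟨xM, hxMG, hxM⟩ := Finset.mem_image.1 this
        exact ⟨xM, hxMG, hxM⟩
      have hMM0 : M ≤ M0 := hxM ▸ hlev _ hxMG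
      have hh01 : 1 ≤ h0 := hx0 ▸ (hmemD _ hx0G).1
      -- n ≥ 1
      have hsubunit : ∀ x ∈ G, dyadic (x.1 - 1) x.2 ⊆ Set.Ico (0:ℝ) 1 := by
        intro x hx
        obtain ⟨_, h2, h3⟩ := hmemD _ hx
        exact dyadic_subset_unit h2 h3
      have hn1 : 1 ≤ n := by
        obtain ⟨t0, ht0⟩ := dyadic_nonempty (x0.1 - 1) x0.2
        have htunit : t0 ∈ Set.Ico (0:ℝ) 1 := hsubunit _ hx0G ht0
        have h1 : 1 ≤ branchCount G t0 :=
          Finset.card_pos.2 ⟨x0, Finset.mem_filter.2 ⟨hx0G, ht0⟩⟩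
        have h2 := branchCount_le_lh G htunit
        omega
      by_cases hband : M < h0 + n
      · refine hdone G (h0 - 1) ?_
        intro x hx
        rw [mem_Dtree]
        obtain ⟨_, h2, h3⟩ := hmemD _ hx
        have := hlevh0 _ hx
        have := hlevM _ hx
        exact ⟨by omega, by omega, h2, h3⟩
      · push_neg at hband
        obtain ⟨y, hyG, hyadm, hysub, hybd⟩ :=
          exists_admissible G hmemD (M - h0) x0 hx0G
            (fun z hz => by have := hlevM _ hz; omega)
        -- level bound for y
        have hyM : y.1 + 1 ≤ M := by
          obtain ⟨t0, ht0⟩ := dyadic_nonempty (y.1 - 1) y.2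
          have hb := hybd t0 ht0
          have htunit : t0 ∈ Set.Ico (0:ℝ) 1 := hsubunit _ hyG (by exact ht0)
          have hc1 : (G.filter fun z => t0 ∈ dyadic (z.1 - 1) z.2 ∧ x0.1 ≤ z.1).card
              ≤ branchCount G t0 := by
            apply Finset.card_le_card
            intro z hz
            have := Finset.mem_filter.1 hz
            exact Finset.mem_filter.2 ⟨this.1, this.2.1⟩
          have hc2 := branchCount_le_lh G htunit
          rw [hlh] at hc2
          omega
        have hyM0 : y.1 < M0 := by omega
        have hyadm' : admissible G (y.1, y.2) := hyadm
        set G1 := PhiT y.1 y.2 G with hG1def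
        have hmemD1 : ∀ x ∈ G1, memD x := PhiT_memD hmemD hyadm'
        have hlev1 : ∀ x ∈ G1, x.1 ≤ M0 := PhiT_level_le hlev (by omega)
        have hlh1 : lh G1 = n := (lh_PhiT hmemD hyadm').trans hlh
        have hw1 : (∑ x ∈ G1, 3 ^ (M0 - x.1)) ≤ w := by
          have hlt := weight_PhiT_lt hmemD hyadm' hyM0
          rw [← hG1def] at hlt
          omega
        obtain ⟨m, N, Gs, his, hGs0, hstep, hfin⟩ := ih G1 hmemD1 hlev1 hlh1 hw1
        refine ⟨m, N + 1, fun l => if l = 0 then G else Gs (l - 1),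
          fun l => if l = 0 then (y.1, y.2) else his (l - 1), by simp, ?_, ?_⟩
        · intro l hl
          cases l with
          | zero =>
            refine ⟨by simpa using hyadm', ?_⟩
            simp [hGs0, hG1def]
          | succ l' =>
            have hl' : l' < N := by omega
            obtain ⟨ha, hb⟩ := hstep l' hl'
            refine ⟨by simpa using ha, ?_⟩
            simpa using hb
        · simpa using hfin

end Main

theorem compression (F : Finset (ℕ × ℤ)) (hF : ∀ kj ∈ F, memD kj) (n : ℕ) (hlh : lh F = n) :
    ∃ (m N : ℕ) (G : ℕ → Finset (ℕ × ℤ)) (hi : ℕ → ℕ × ℤ),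
      G 0 = F ∧
      (∀ l < N, admissible (G l) (hi l) ∧ G (l + 1) = PhiT (hi l).1 (hi l).2 (G l)) ∧
      G N ⊆ Dtree (m + 1) (m + n) := by
  exact compress_aux n (F.sup Prod.fst) (∑ x ∈ F, 3 ^ (F.sup Prod.fst - x.1)) F hF
    (fun x hx => Finset.le_sup hx) hlh (le_refl _)
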